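/- Let X be a p×n real matrix whose columns are partitioned into τ groups of sizes n₁,…,n_τ (n = Σn_i), with group means x̄_i and k_{ni} = n_i/n. Let Φ = I_n − 1_n1_nᵀ/n, B = (1/n) Σ_{i=1}^τ Σ_{j=1}^{n_i} (x_{ij} − x̄_i)(x_{ij} − x̄_i)ᵀ, Û = (√k_{n1} x̄₁, …, √k_{nτ} x̄_τ) (p×τ), and N_n the τ×τ matrix with diagonal entries 1 − k_{ni} and (i,j) off-diagonal entries −√(k_{ni}k_{nj}). Then (1/n) X Φ Xᵀ = B + Û N_n Ûᵀ, and for any real λ̃ ≠ 0 that is not an eigenvalue of B, λ̃ is an eigenvalue of (1/n) X Φ Xᵀ if and only if det( I_τ + N_n Ûᵀ (B − λ̃ I_p)^{−1} Û N_n ) = 0. -/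

import Mathlib

/-!
Write `k i = n_i / n` and `v = (√k₁, …, √k_τ)`, so that `N = 1 - v vᵀ`. Then
`Û N Ûᵀ = Û Ûᵀ - (Û v)(Û v)ᵀ = ∑ k_i x̄_i x̄_iᵀ - x̄ x̄ᵀ`, where `Û v = x̄ = X 1 / n` is the grand
mean, while `B` is the within-group scatter. Expanding each group around its mean
(`∑ⱼ (x_j - x̄_i)(x_j - x̄_i)ᵀ = ∑ⱼ x_j x_jᵀ - n_i x̄_i x̄_iᵀ`) shows that the two add up to the total
scatter `(1/n) X Φ Xᵀ = (1/n) X Xᵀ - x̄ x̄ᵀ`.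

Since `∑ k_i = 1`, `v` is a unit vector and `N` is idempotent, so `Û N Ûᵀ = (Û N)(N Ûᵀ)`.
Factoring out `M = B - λ̃ I` and applying `det (1 + A B) = det (1 + B A)` gives
`det (M + Û N Ûᵀ) = det M · det (1 + N Ûᵀ M⁻¹ Û N)`.
-/

open Matrix

namespace RSCM

noncomputable section

def phiMat (n : ℕ) : Matrix (Fin n) (Fin n) ℝ :=
  1 - (n : ℝ)⁻¹ • Matrix.of (fun _ _ => (1 : ℝ))

end

end RSCM

open Finset

namespace Matrix

variable {ι κ m n R : Type*} [CommRing R]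

theorem sum_vecMulVec (s : Finset ι) (x : ι → m → R) (y : n → R) :
    ∑ j ∈ s, vecMulVec (x j) y = vecMulVec (∑ j ∈ s, x j) y :=
  (map_sum ((vecMulVecBilin R R).flip y) x s).symm

theorem vecMulVec_sum (s : Finset ι) (x : m → R) (y : ι → n → R) :
    ∑ j ∈ s, vecMulVec x (y j) = vecMulVec x (∑ j ∈ s, y j) :=
  (map_sum (vecMulVecBilin R R x) y s).symm

theorem mul_transpose_eq_sum_vecMulVec [Fintype n] (A : Matrix m n R) :
    A * Aᵀ = ∑ j, vecMulVec (Aᵀ j) (Aᵀ j) := by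
  ext a b
  simp [mul_apply, sum_apply, vecMulVec_apply]

theorem isIdempotentElem_vecMulVec_self [Fintype n] {v : n → R} (hv : v ⬝ᵥ v = 1) :
    IsIdempotentElem (vecMulVec v v) := by
  rw [IsIdempotentElem, vecMulVec_mul_vecMulVec, hv, one_smul]

theorem mul_one_sub_vecMulVec_mul_transpose [Fintype n] [DecidableEq n] (U : Matrix m n R)
    (v : n → R) : U * (1 - vecMulVec v v) * Uᵀ = U * Uᵀ - vecMulVec (U *ᵥ v) (U *ᵥ v) := by
  rw [Matrix.mul_sub, Matrix.mul_one, Matrix.sub_mul, mul_vecMulVec, vecMulVec_mul,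
    vecMul_transpose]

theorem det_add_mul_idempotent_mul [Fintype m] [DecidableEq m] [Fintype n] [DecidableEq n]
    {M : Matrix m m R} (hM : IsUnit M.det) (U : Matrix m n R) (W : Matrix n m R)
    {P : Matrix n n R} (hP : IsIdempotentElem P) :
    (M + U * P * W).det = M.det * (1 + P * W * M⁻¹ * U * P).det := by
  have hfactor : M + U * P * W = M * (1 + M⁻¹ * (U * P) * (P * W)) := by
    simp only [Matrix.mul_add, Matrix.mul_one, ← Matrix.mul_assoc, mul_nonsing_inv M hM,
      Matrix.one_mul]
    rw [Matrix.mul_assoc U P P, hP.eq]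
  rw [hfactor, det_mul, det_one_add_mul_comm]
  simp only [Matrix.mul_assoc]

theorem sum_vecMulVec_sub_of_sum_eq_card_smul (s : Finset ι) (x : ι → m → R) {c : m → R}
    (hc : ∑ j ∈ s, x j = (#s : R) • c) :
    ∑ j ∈ s, vecMulVec (x j - c) (x j - c) =
      ∑ j ∈ s, vecMulVec (x j) (x j) - (#s : R) • vecMulVec c c := by
  simp only [sub_vecMulVec, vecMulVec_sub, sum_sub_distrib]
  rw [sum_vecMulVec, vecMulVec_sum, sum_const, hc, smul_vecMulVec, vecMulVec_smul]
  module

theorem sum_vecMulVec_sub_fiberMean [Fintype ι] [Fintype κ] [DecidableEq κ] (g : ι → κ)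
    (x : ι → m → R) {c : κ → m → R} (hc : ∀ i, ∑ j with g j = i, x j = (#{j | g j = i} : R) • c i) :
    ∑ j, vecMulVec (x j - c (g j)) (x j - c (g j)) =
      ∑ j, vecMulVec (x j) (x j) - ∑ i, (#{j | g j = i} : R) • vecMulVec (c i) (c i) := by
  rw [← sum_fiberwise univ g, ← sum_fiberwise univ g (fun j => vecMulVec (x j) (x j)),
    ← sum_sub_distrib]
  refine sum_congr rfl fun i _ => ?_
  rw [← sum_vecMulVec_sub_of_sum_eq_card_smul _ _ (hc i)]
  exact sum_congr rfl fun j hj => by rw [(mem_filter.mp hj).2]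

theorem sum_card_smul_fiberMean [Fintype ι] [Fintype κ] [DecidableEq κ] (g : ι → κ)
    (x : ι → m → R) {c : κ → m → R} (hc : ∀ i, ∑ j with g j = i, x j = (#{j | g j = i} : R) • c i) :
    ∑ i, (#{j | g j = i} : R) • c i = ∑ j, x j := by
  simp_rw [← hc]
  exact sum_fiberwise univ g x

end Matrix

namespace RSCM

open Matrix Finset

theorem phiMat_eq_one_sub_vecMulVec (n : ℕ) : phiMat n = 1 - (n : ℝ)⁻¹ • vecMulVec 1 1 := by
  ext i j
  simp [phiMat]

theorem mul_phiMat_mul_transpose {m : Type*} {n : ℕ} (X : Matrix m (Fin n) ℝ) :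
    X * phiMat n * Xᵀ = X * Xᵀ - (n : ℝ)⁻¹ • vecMulVec (∑ j, Xᵀ j) (∑ j, Xᵀ j) := by
  rw [phiMat_eq_one_sub_vecMulVec, Matrix.mul_sub, Matrix.mul_one, Matrix.sub_mul,
    Matrix.mul_smul, Matrix.smul_mul, mul_vecMulVec, vecMulVec_mul, vecMul_transpose, mulVec_one]

section SqrtWeights

variable {κ m : Type*} {k : κ → ℝ}

theorem of_sqrt_mul_mul_transpose [Fintype κ] (hk : ∀ i, 0 ≤ k i) (c : κ → m → ℝ) :
    (of fun q i => √(k i) * c i q) * (of fun q i => √(k i) * c i q)ᵀ =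
      ∑ i, k i • vecMulVec (c i) (c i) := by
  ext q r
  simp only [mul_apply, transpose_apply, of_apply, Matrix.sum_apply, Matrix.smul_apply,
    vecMulVec_apply, smul_eq_mul]
  exact sum_congr rfl fun i _ => by rw [mul_mul_mul_comm, Real.mul_self_sqrt (hk i)]

theorem of_sqrt_mul_mulVec_sqrt [Fintype κ] (hk : ∀ i, 0 ≤ k i) (c : κ → m → ℝ) :
    (of fun q i => √(k i) * c i q) *ᵥ (fun i => √(k i)) = ∑ i, k i • c i := by
  ext q
  simp only [mulVec, dotProduct, of_apply, Finset.sum_apply, Pi.smul_apply, smul_eq_mul]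
  exact sum_congr rfl fun i _ => by rw [mul_right_comm, Real.mul_self_sqrt (hk i)]

theorem sqrt_dotProduct_sqrt [Fintype κ] (hk : ∀ i, 0 ≤ k i) :
    (fun i => √(k i)) ⬝ᵥ (fun i => √(k i)) = ∑ i, k i :=
  sum_congr rfl fun i _ => Real.mul_self_sqrt (hk i)

theorem of_ite_one_sub_eq_one_sub_vecMulVec_sqrt [DecidableEq κ] (hk : ∀ i, 0 ≤ k i) :
    (of fun i j => if i = j then 1 - k i else -√(k i * k j)) =
      1 - vecMulVec (fun i => √(k i)) (fun i => √(k i)) := by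
  ext i j
  rcases eq_or_ne i j with rfl | hij
  · simp [vecMulVec_apply, Real.mul_self_sqrt (hk i)]
  · simp [vecMulVec_apply, hij, Real.sqrt_mul (hk i)]

end SqrtWeights

theorem centered_scatter_eq_within_add_between {m κ : Type*} [Fintype κ] [DecidableEq κ] {n : ℕ}
    (X : Matrix m (Fin n) ℝ) (g : Fin n → κ) {c : κ → m → ℝ}
    (hc : ∀ i, ∑ j with g j = i, Xᵀ j = (#{j | g j = i} : ℝ) • c i) :
    (n : ℝ)⁻¹ • (X * phiMat n * Xᵀ) =
      (n : ℝ)⁻¹ • ∑ j, vecMulVec (Xᵀ j - c (g j)) (Xᵀ j - c (g j)) +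
        (∑ i, ((#{j | g j = i} : ℝ) / n) • vecMulVec (c i) (c i) -
          vecMulVec (∑ i, ((#{j | g j = i} : ℝ) / n) • c i)
            (∑ i, ((#{j | g j = i} : ℝ) / n) • c i)) := by
  have hgrand : ∑ i, ((#{j | g j = i} : ℝ) / n) • c i = (n : ℝ)⁻¹ • ∑ j, Xᵀ j := by
    rw [← sum_card_smul_fiberMean g _ hc, smul_sum]
    simp only [smul_smul, div_eq_inv_mul]
  rw [mul_phiMat_mul_transpose, sum_vecMulVec_sub_fiberMean g _ hc,
    mul_transpose_eq_sum_vecMulVec, hgrand]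
  simp only [div_eq_inv_mul, ← smul_smul, ← smul_sum, smul_vecMulVec, vecMulVec_smul]
  module

/-- Group-mean decomposition of the sample covariance matrix and
the determinant criterion for its eigenvalues: `(1/n) X Φ Xᵀ = B + Û N Ûᵀ`, and a
real `λ̃ ≠ 0` which is not an eigenvalue of `B` is an eigenvalue of `(1/n) X Φ Xᵀ`
iff `det(I_τ + N Ûᵀ (B − λ̃ I)⁻¹ Û N) = 0`. -/
theorem covariance_decomposition_det_criterion
    {p n τ : ℕ} (hτ : 1 ≤ τ)
    (X : Matrix (Fin p) (Fin n) ℝ) (grp : Fin n → Fin τ) (ni : Fin τ → ℕ)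
    (hgrp : ∀ i, (Finset.univ.filter fun j : Fin n => grp j = i).card = ni i)
    (hni : ∀ i, 1 ≤ ni i) (hsum : ∑ i, ni i = n) :
    let xbar : Fin τ → Fin p → ℝ := fun i q =>
      (ni i : ℝ)⁻¹ * ∑ j ∈ Finset.univ.filter (fun j : Fin n => grp j = i), X q j
    let B : Matrix (Fin p) (Fin p) ℝ :=
      (n : ℝ)⁻¹ • ∑ j : Fin n,
        Matrix.vecMulVec (fun q => X q j - xbar (grp j) q) (fun q => X q j - xbar (grp j) q)
    let U : Matrix (Fin p) (Fin τ) ℝ :=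
      Matrix.of fun q i => Real.sqrt ((ni i : ℝ) / n) * xbar i q
    let N : Matrix (Fin τ) (Fin τ) ℝ :=
      Matrix.of fun i j =>
        if i = j then 1 - (ni i : ℝ) / n
        else -Real.sqrt (((ni i : ℝ) / n) * ((ni j : ℝ) / n))
    ((n : ℝ)⁻¹ • (X * phiMat n * Xᵀ) = B + U * N * Uᵀ) ∧
    ∀ lam : ℝ, lam ≠ 0 → (B - lam • 1).det ≠ 0 →
      (((n : ℝ)⁻¹ • (X * phiMat n * Xᵀ) - lam • (1 : Matrix (Fin p) (Fin p) ℝ)).det = 0 ↔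
        ((1 : Matrix (Fin τ) (Fin τ) ℝ) + N * Uᵀ * (B - lam • 1)⁻¹ * U * N).det = 0) := by
  intro xbar B U N
  have hn : (n : ℝ) ≠ 0 :=
    Nat.cast_ne_zero.mpr (hsum ▸ (sum_pos (fun i _ => hni i) ⟨⟨0, hτ⟩, mem_univ _⟩).ne')
  have hk : ∀ i, 0 ≤ (ni i : ℝ) / n := fun i => by positivity
  have hmean : ∀ i, ∑ j with grp j = i, Xᵀ j = (#{j | grp j = i} : ℝ) • xbar i := by
    intro i
    ext q
    have hni0 : (ni i : ℝ) ≠ 0 := Nat.cast_ne_zero.mpr (Nat.one_le_iff_ne_zero.mp (hni i))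
    simp only [Pi.smul_apply, hgrp, smul_eq_mul, xbar, mul_inv_cancel_left₀ hni0]
    exact Finset.sum_apply _ _ _
  have hN : N = 1 - vecMulVec (fun i => √((ni i : ℝ) / n)) (fun i => √((ni i : ℝ) / n)) :=
    of_ite_one_sub_eq_one_sub_vecMulVec_sqrt hk
  have hdec : (n : ℝ)⁻¹ • (X * phiMat n * Xᵀ) = B + U * N * Uᵀ := by
    rw [hN, mul_one_sub_vecMulVec_mul_transpose, of_sqrt_mul_mul_transpose hk,
      of_sqrt_mul_mulVec_sqrt hk]
    have hscatter := centered_scatter_eq_within_add_between X grp hmean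
    simp only [hgrp] at hscatter
    exact hscatter
  refine ⟨hdec, fun lam _ hdet => ?_⟩
  have hv : (fun i => √((ni i : ℝ) / n)) ⬝ᵥ (fun i => √((ni i : ℝ) / n)) = 1 := by
    rw [sqrt_dotProduct_sqrt hk, ← sum_div, ← Nat.cast_sum, hsum, div_self hn]
  rw [hdec, add_sub_right_comm, hN, det_add_mul_idempotent_mul (isUnit_iff_ne_zero.mpr hdet) U Uᵀ
    (isIdempotentElem_vecMulVec_self hv).one_sub, mul_eq_zero_iff_left hdet]

end RSCM
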